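/- arXiv:1801.09298 — 2 statements merged into one kernel-verified Lean document; each statement's English description precedes it below -/
import Mathlib

section
/- Let 𝓔 be a cone-like cluster in ℝ^N (chambers are open cones with vertex 0) with locally finite perimeter, and suppose the density Θ_y(𝓔) exists at every point. If e_N ∈ ∂𝓔 and ε e_N ∈ ∂𝓔 for all ε > 0, and the monotonicity formula holds with Λ = 0 (i.e. r ↦ P(𝓔; B_r(y))/(ω_{N-1}r^{N-1}) is nondecreasing for each y ∈ ∂𝓔), then Θ₀(𝓔) ≥ Θ_{e_N}(𝓔). -/
open MeasureTheory Metric Set Filter Pointwise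

/-- `ℝ^N` as a Euclidean space. -/
abbrev Euc (N : ℕ) := EuclideanSpace ℝ (Fin N)

/-- The divergence of a vector field, as the trace of its Fréchet derivative. -/
noncomputable def divg {N : ℕ} (X : Euc N → Euc N) (x : Euc N) : ℝ :=
  LinearMap.trace ℝ (Euc N) (fderiv ℝ X x).toLinearMap

/-- De Giorgi's relative perimeter of a set `E` in an open set `A`. -/
noncomputable def per {N : ℕ} (E A : Set (Euc N)) : ℝ :=
  sSup {c : ℝ | ∃ X : Euc N → Euc N, ContDiff ℝ 1 X ∧ (∀ x, ‖X x‖ ≤ 1) ∧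
    IsCompact (tsupport X) ∧ tsupport X ⊆ A ∧ c = ∫ x in E, divg X x}

/-- The relative perimeter of a cluster: half the sum of the chamber perimeters. -/
noncomputable def clPer {N m : ℕ} (E : Fin m → Set (Euc N)) (A : Set (Euc N)) : ℝ :=
  (∑ i, per (E i) A) / 2

/-- The volume of the unit ball in `ℝ^N`. -/
noncomputable def unitBallVol (N : ℕ) : ℝ :=
  (volume (ball (0 : Euc N) 1)).toReal

/-!
Dilating the test fields by `t` shows that a dilation-invariant set in `ℝ^N` has
`per E (t • A) = t ^ (N - 1) * per E A`. Hence the density ratio of a cone-like cluster is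
constant at `0`, and the density at `ε e_N` equals the one at `e_N`. Monotonicity at `ε e_N`
bounds that density by the ratio of the ball `B_{1-ε}(ε e_N) ⊆ B_1(0)`, which is at most
`Θ₀ / (1 - ε) ^ n`; let `ε → 0`.
-/

open Topology

lemma MonotoneOn.le_of_tendsto_nhdsGT {α β : Type*} [LinearOrder α] [TopologicalSpace α]
    [OrderTopology α] [DenselyOrdered α] [Preorder β] [TopologicalSpace β]
    [OrderClosedTopology β] {f : α → β} {a r : α} {l : β} (hf : MonotoneOn f (Ioi a))
    (hl : Tendsto f (𝓝[>] a) (𝓝 l)) (hr : a < r) : l ≤ f r :=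
  have := nhdsGT_neBot_of_exists_gt ⟨r, hr⟩
  le_of_tendsto hl <| by
    filter_upwards [Ioo_mem_nhdsGT hr] with x hx
    exact hf hx.1 hr hx.2.le

section Perimeter

variable {N : ℕ}

def perSet (E A : Set (Euc N)) : Set ℝ :=
  {c : ℝ | ∃ X : Euc N → Euc N, ContDiff ℝ 1 X ∧ (∀ x, ‖X x‖ ≤ 1) ∧
    IsCompact (tsupport X) ∧ tsupport X ⊆ A ∧ c = ∫ x in E, divg X x}

lemma per_eq_sSup (E A : Set (Euc N)) : per E A = sSup (perSet E A) := rfl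

lemma zero_mem_perSet (E A : Set (Euc N)) : (0 : ℝ) ∈ perSet E A :=
  ⟨0, contDiff_const, by simp, by simp, by simp, by simp [divg]⟩

lemma perSet_mono (E : Set (Euc N)) {A A' : Set (Euc N)} (h : A ⊆ A') :
    perSet E A ⊆ perSet E A' := by
  rintro c ⟨X, hX, hX1, hK, hA, rfl⟩
  exact ⟨X, hX, hX1, hK, hA.trans h, rfl⟩

lemma divg_comp_smul {X : Euc N → Euc N} (hX : Differentiable ℝ X) (c : ℝ) (x : Euc N) :
    divg (fun x => X (c • x)) x = c * divg X (c • x) := by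
  have hcomp : HasFDerivAt (fun x => X (c • x))
      ((fderiv ℝ X (c • x)).comp (c • ContinuousLinearMap.id ℝ (Euc N))) x :=
    (hX _).hasFDerivAt.comp x ((hasFDerivAt_id x).const_smul c)
  simp [divg, hcomp.fderiv]

lemma tsupport_comp_smul_inv (X : Euc N → Euc N) {t : ℝ} (ht : t ≠ 0) :
    tsupport (fun x => X (t⁻¹ • x)) = t • tsupport X := by
  rw [← preimage_smul_inv₀ ht]
  exact tsupport_comp_eq_preimage X (Homeomorph.smulOfNeZero t⁻¹ (inv_ne_zero ht))

lemma smul_perSet_subset {E : Set (Euc N)} (A : Set (Euc N)) {t : ℝ} (ht : 0 < t)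
    (hE : t • E = E) : (t ^ N * t⁻¹) • perSet E A ⊆ perSet E (t • A) := by
  rintro _ ⟨_, ⟨X, hX, hX1, hK, hA, rfl⟩, rfl⟩
  have hEinv : t⁻¹ • E = E := by rw [inv_smul_eq_iff₀ ht.ne', hE]
  refine ⟨fun x => X (t⁻¹ • x), hX.comp (contDiff_const_smul t⁻¹), fun x => hX1 _, ?_, ?_, ?_⟩
  · rw [tsupport_comp_smul_inv X ht.ne']
    exact hK.smul t
  · rw [tsupport_comp_smul_inv X ht.ne']
    exact smul_set_mono hA
  · simp only [divg_comp_smul (hX.differentiable one_ne_zero)]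
    rw [integral_const_mul, Measure.setIntegral_comp_smul_of_pos _ _ _ (inv_pos.mpr ht), hEinv,
      finrank_euclideanSpace_fin, smul_eq_mul, inv_pow, inv_inv, smul_eq_mul]
    ring

lemma perSet_smul {E : Set (Euc N)} (A : Set (Euc N)) {t : ℝ} (ht : 0 < t)
    (hE : t • E = E) : perSet E (t • A) = (t ^ N * t⁻¹) • perSet E A := by
  have hEinv : t⁻¹ • E = E := by rw [inv_smul_eq_iff₀ ht.ne', hE]
  refine (smul_perSet_subset A ht hE).antisymm' ?_
  have h := smul_perSet_subset (t • A) (inv_pos.mpr ht) hEinv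
  rw [inv_smul_smul₀ ht.ne', inv_pow, inv_inv] at h
  rwa [Set.subset_smul_set_iff₀ (by positivity), mul_inv, inv_inv]

lemma per_smul {E : Set (Euc N)} (A : Set (Euc N)) {t : ℝ} (ht : 0 < t) (hE : t • E = E) :
    per E (t • A) = (t ^ N * t⁻¹) * per E A := by
  rw [per_eq_sSup, per_eq_sSup, perSet_smul A ht hE,
    Real.sSup_smul_of_nonneg (by positivity), smul_eq_mul]

/-- `per E` need not be monotone in the open set, since `sSup` of an unbounded set
is `0`; scale invariance of `E` rules out a bounded `perSet E A'` beside an unbounded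
`perSet E A`. -/
lemma per_mono_of_smul_subset {E A A' : Set (Euc N)} {t : ℝ} (ht : 0 < t) (hE : t • E = E)
    (hA : A ⊆ A') (htA : t • A' ⊆ A) : per E A ≤ per E A' := by
  by_cases hbdd : BddAbove (perSet E A')
  · exact csSup_le_csSup hbdd ⟨0, zero_mem_perSet E A⟩ (perSet_mono E hA)
  · have hbddA : ¬ BddAbove (perSet E A) := fun h => hbdd <| by
      have := h.mono (perSet_mono E htA)
      rwa [perSet_smul A' ht hE, bddAbove_smul_iff_of_pos (by positivity)] at this
    rw [per_eq_sSup, per_eq_sSup, Real.sSup_of_not_bddAbove hbdd,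
      Real.sSup_of_not_bddAbove hbddA]

end Perimeter

section Cluster

variable {n m : ℕ} {E : Fin m → Set (Euc (n + 1))}

lemma clPer_smul (A : Set (Euc (n + 1))) {t : ℝ} (ht : 0 < t) (hE : ∀ i, t • E i = E i) :
    clPer E (t • A) = t ^ n * clPer E A := by
  simp only [clPer, per_smul A ht (hE _), ← Finset.mul_sum, pow_succ, mul_assoc,
    mul_inv_cancel₀ ht.ne', mul_one, mul_div_assoc]

lemma clPer_mono_of_smul_subset {A A' : Set (Euc (n + 1))} {t : ℝ} (ht : 0 < t)
    (hE : ∀ i, t • E i = E i) (hA : A ⊆ A') (htA : t • A' ⊆ A) : clPer E A ≤ clPer E A' := by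
  unfold clPer
  gcongr with i
  exact per_mono_of_smul_subset ht (hE i) hA htA

noncomputable def densityRatio (E : Fin m → Set (Euc (n + 1))) (y : Euc (n + 1)) (r : ℝ) : ℝ :=
  clPer E (ball y r) / (unitBallVol n * r ^ n)

lemma densityRatio_smul (y : Euc (n + 1)) (r : ℝ) {t : ℝ} (ht : 0 < t)
    (hE : ∀ i, t • E i = E i) : densityRatio E (t • y) (t * r) = densityRatio E y r := by
  have hball : ball (t • y) (t * r) = t • ball y r := by
    rw [_root_.smul_ball ht.ne', Real.norm_of_nonneg ht.le]
  rw [densityRatio, densityRatio, hball, clPer_smul _ ht hE, mul_pow]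
  field_simp

lemma tendsto_densityRatio_zero (hcone : ∀ i, ∀ t : ℝ, 0 < t → t • E i = E i) :
    Tendsto (densityRatio E 0) (𝓝[>] 0) (𝓝 (densityRatio E 0 1)) := by
  refine tendsto_const_nhds.congr' ?_
  filter_upwards [self_mem_nhdsWithin] with r hr
  simpa using (densityRatio_smul 0 1 hr (hcone · r hr)).symm

lemma tendsto_densityRatio_smul {y : Euc (n + 1)} {θ : ℝ}
    (h : Tendsto (densityRatio E y) (𝓝[>] 0) (𝓝 θ)) {t : ℝ} (ht : 0 < t)
    (hE : ∀ i, t • E i = E i) : Tendsto (densityRatio E (t • y)) (𝓝[>] 0) (𝓝 θ) := by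
  have hscale : Tendsto (t⁻¹ * ·) (𝓝[>] (0 : ℝ)) (𝓝[>] 0) := by
    refine tendsto_nhdsWithin_iff.mpr ⟨?_, ?_⟩
    · simpa using ((continuous_const_mul t⁻¹).tendsto 0).mono_left nhdsWithin_le_nhds
    · filter_upwards [self_mem_nhdsWithin] with r hr
      exact mul_pos (inv_pos.mpr ht) hr
  refine (h.comp hscale).congr fun r => ?_
  simp only [Function.comp_apply]
  rw [← densityRatio_smul y _ ht hE, mul_inv_cancel_left₀ ht.ne']

lemma densityRatio_mul_pow_le (hcone : ∀ i, ∀ t : ℝ, 0 < t → t • E i = E i)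
    {y : Euc (n + 1)} (hy : ‖y‖ ≤ 1) {ε : ℝ} (hε0 : 0 < ε) (hε : ε < 1 / 2) :
    densityRatio E (ε • y) (1 - ε) * (1 - ε) ^ n ≤ densityRatio E 0 1 := by
  have hdist : dist (ε • y) 0 ≤ ε := by
    rw [dist_zero_right, norm_smul, Real.norm_of_nonneg hε0.le]
    exact mul_le_of_le_one_right hε0.le hy
  have hout : ball (ε • y) (1 - ε) ⊆ ball 0 1 := ball_subset_ball' (by linarith)
  have hin : (1 - 2 * ε) • ball 0 1 ⊆ ball (ε • y) (1 - ε) := by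
    rw [_root_.smul_ball (by linarith), smul_zero, Real.norm_of_nonneg (by linarith), mul_one]
    exact ball_subset_ball' (by rw [dist_comm]; linarith)
  have hper := clPer_mono_of_smul_subset (by linarith) (hcone · _ (by linarith)) hout hin
  rw [densityRatio, densityRatio, div_mul_eq_mul_div,
    mul_div_mul_right _ _ (pow_ne_zero _ (by linarith)), one_pow, mul_one]
  exact div_le_div_of_nonneg_right hper ENNReal.toReal_nonneg

theorem le_densityRatio_zero_one (hcone : ∀ i, ∀ t : ℝ, 0 < t → t • E i = E i)
    {y : Euc (n + 1)} (hy : ‖y‖ ≤ 1) {θ : ℝ} (hθ : Tendsto (densityRatio E y) (𝓝[>] 0) (𝓝 θ))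
    (hmono : ∀ ε : ℝ, 0 < ε → MonotoneOn (densityRatio E (ε • y)) (Ioi 0)) :
    θ ≤ densityRatio E 0 1 := by
  have hbound : ∀ ε ∈ Ioo (0 : ℝ) (1 / 2), θ * (1 - ε) ^ n ≤ densityRatio E 0 1 := by
    rintro ε ⟨hε0, hε⟩
    have hθε : θ ≤ densityRatio E (ε • y) (1 - ε) :=
      (hmono ε hε0).le_of_tendsto_nhdsGT (tendsto_densityRatio_smul hθ hε0 (hcone · ε hε0))
        (by linarith)
    calc θ * (1 - ε) ^ n ≤ densityRatio E (ε • y) (1 - ε) * (1 - ε) ^ n := by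
          gcongr
          exact pow_nonneg (by linarith) n
      _ ≤ densityRatio E 0 1 := densityRatio_mul_pow_le hcone hy hε0 hε
  have hlim : Tendsto (fun ε : ℝ => θ * (1 - ε) ^ n) (𝓝[>] 0) (𝓝 θ) := by
    have hcont : Continuous fun ε : ℝ => θ * (1 - ε) ^ n := by fun_prop
    simpa using hcont.continuousWithinAt.tendsto (s := Ioi 0) (x := 0)
  refine le_of_tendsto hlim ?_
  filter_upwards [Ioo_mem_nhdsGT (by norm_num : (0 : ℝ) < 1 / 2)] with ε hε using hbound ε hε

end Cluster

theorem density_at_origin_ge_density_at_eN_general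
    (n m : ℕ) (E : Fin m → Set (Euc (n + 1)))
    (hcone : ∀ i, ∀ t : ℝ, 0 < t → t • E i = E i)
    (Θ : Euc (n + 1) → ℝ)
    (hΘ : ∀ y : Euc (n + 1), Tendsto
      (fun r : ℝ => clPer E (ball y r) / (unitBallVol n * r ^ n))
      (nhdsWithin 0 (Ioi 0)) (nhds (Θ y)))
    (heps : ∀ ε : ℝ, 0 < ε →
      ε • EuclideanSpace.single (Fin.last n) (1 : ℝ) ∈ ⋃ i, frontier (E i))
    (hmono : ∀ y ∈ ⋃ i, frontier (E i), MonotoneOn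
      (fun r : ℝ => clPer E (ball y r) / (unitBallVol n * r ^ n)) (Ioi 0)) :
    Θ (EuclideanSpace.single (Fin.last n) (1 : ℝ)) ≤ Θ 0 := by
  rw [tendsto_nhds_unique (hΘ 0) (tendsto_densityRatio_zero hcone)]
  exact le_densityRatio_zero_one hcone (by simp) (hΘ _) fun ε hε => hmono _ (heps ε hε)

/-- For a cone-like cluster `𝓔` in `ℝ^{n+1}` whose density exists at every point, if
`e_N ∈ ∂𝓔`, `ε e_N ∈ ∂𝓔` for all `ε > 0`, and the density ratio is nondecreasing at each
boundary point (monotonicity with `Λ = 0`), then `Θ₀(𝓔) ≥ Θ_{e_N}(𝓔)`. -/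
theorem density_at_origin_ge_density_at_eN
    (n m : ℕ) (E : Fin m → Set (Euc (n + 1)))
    (hopen : ∀ i, IsOpen (E i))
    (hcone : ∀ i, ∀ t : ℝ, 0 < t → t • E i = E i)
    (hdisj : ∀ i j, i ≠ j → volume (E i ∩ E j) = 0)
    (Θ : Euc (n + 1) → ℝ)
    (hΘ : ∀ y : Euc (n + 1), Tendsto
      (fun r : ℝ => clPer E (ball y r) / (unitBallVol n * r ^ n))
      (nhdsWithin 0 (Ioi 0)) (nhds (Θ y)))
    (heN : EuclideanSpace.single (Fin.last n) (1 : ℝ) ∈ ⋃ i, frontier (E i))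
    (heps : ∀ ε : ℝ, 0 < ε →
      ε • EuclideanSpace.single (Fin.last n) (1 : ℝ) ∈ ⋃ i, frontier (E i))
    (hmono : ∀ y ∈ ⋃ i, frontier (E i), MonotoneOn
      (fun r : ℝ => clPer E (ball y r) / (unitBallVol n * r ^ n)) (Ioi 0)) :
    Θ (EuclideanSpace.single (Fin.last n) (1 : ℝ)) ≤ Θ 0 :=
  density_at_origin_ge_density_at_eN_general n m E hcone Θ hΘ heps hmono
end

section
/- Let X(x) = φ(|y|) f(t) e_N be a vector field on ℝ^N = ℝ^{N-1} × ℝ with coordinates x = (y,t), where φ, f ∈ C¹(ℝ) are non-negative and non-increasing with φ(s) = f(s) = 1 for s ≤ 0. Let K ⊂ ℝ^N be an open cone with vertex 0, with smooth boundary away from 0 and outer unit normal ν. Then the tangential (boundary) divergence of X on ∂K satisfies div_{∂K} X = φ(|y|) f'(t)(1 − ⟨ν, e_N⟩²) + φ'(|y|) (f(t)/|y|) t ⟨ν, e_N⟩² ≤ 0 at every point of ∂K with t ≥ 0 and y ≠ 0. -/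
open MeasureTheory Metric Set Pointwise RealInnerProductSpace

/-- The canonical projection `ℝ^{n+1} → ℝ^n`, `x = (y,t) ↦ y`. -/
noncomputable def projFst {n : ℕ} (x : Euc (n + 1)) : Euc n :=
  (EuclideanSpace.equiv (Fin n) ℝ).symm fun j => x j.castSucc

/-- The vector field `X(y,t) = φ(|y|) f(t) e_N` on `ℝ^{n+1}`. -/
noncomputable def Xfield {n : ℕ} (φ f : ℝ → ℝ) (x : Euc (n + 1)) : Euc (n + 1) :=
  (φ ‖projFst x‖ * f (x (Fin.last n))) • EuclideanSpace.single (Fin.last n) (1 : ℝ)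

/-
Write `y = projFst x`, `t = x_N`, `e = e_N`. The field is `g • e` for the scalar
`g v = φ(|projFst v|) f(v_N)`, so its derivative `dg ⊗ e` has rank one and
`div X - ⟨DX ν, ν⟩ = dg(e) - dg(ν) ⟨e, ν⟩`, where `dg(e) = φ(|y|) f'(t)` and
`dg(ν) = φ(|y|) f'(t) ν_N + f(t) φ'(|y|) ⟨y, projFst ν⟩ / |y|`. The cone relation `⟨x, ν⟩ = 0`
turns `⟨y, projFst ν⟩` into `-t ν_N`, and then both terms of the formula are products of factors
of known sign, as `φ', f' ≤ 0` and `ν_N² ≤ |ν|² = 1`.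
-/
noncomputable def projFstL (n : ℕ) : Euc (n + 1) →L[ℝ] Euc n :=
  (EuclideanSpace.equiv (Fin n) ℝ).symm.toContinuousLinearMap.comp
    (ContinuousLinearMap.pi fun j : Fin n => EuclideanSpace.proj j.castSucc)

@[simp]
lemma projFstL_apply {n : ℕ} (x : Euc (n + 1)) : projFstL n x = projFst x := rfl

@[simp]
lemma projFst_single_last (n : ℕ) (a : ℝ) :
    projFst (EuclideanSpace.single (Fin.last n) a) = 0 := by
  ext j
  simp [projFst]

lemma inner_eq_inner_projFst_add {n : ℕ} (x z : Euc (n + 1)) :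
    ⟪x, z⟫ = ⟪projFst x, projFst z⟫ + x (Fin.last n) * z (Fin.last n) := by
  simp only [projFst, PiLp.inner_apply, RCLike.inner_apply, conj_trivial, Fin.sum_univ_castSucc]
  rw [mul_comm (x _)]
  rfl

lemma hasFDerivAt_norm_of_ne_zero {E : Type*} [NormedAddCommGroup E] [InnerProductSpace ℝ E]
    {y : E} (hy : y ≠ 0) : HasFDerivAt (fun v : E => ‖v‖) (‖y‖⁻¹ • innerSL ℝ y) y := by
  have hsq := ((hasStrictFDerivAt_norm_sq y).hasFDerivAt).sqrt (by positivity)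
  simp only [Real.sqrt_sq (norm_nonneg _)] at hsq
  convert hsq using 1
  rw [← Nat.cast_smul_eq_nsmul ℝ, smul_smul]
  congr 1
  ring

lemma divg_sub_inner_fderiv_smul_const {N : ℕ} {g : Euc N → ℝ} {G : Euc N →L[ℝ] ℝ}
    {x : Euc N} (hg : HasFDerivAt g G x) (e ν : Euc N) :
    divg (fun v => g v • e) x - ⟪fderiv ℝ (fun v => g v • e) x ν, ν⟫ =
      G e - G ν * ⟪e, ν⟫ := by
  rw [divg, (hg.smul_const e).fderiv, ContinuousLinearMap.smulRight_apply,
    real_inner_smul_left]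
  exact congrArg (· - _) (LinearMap.trace_smulRight G.toLinearMap e)

section Xfield

variable {n : ℕ} {φ f : ℝ → ℝ} {φ' f' : ℝ} {x : Euc (n + 1)}

lemma hasFDerivAt_Xfield_coeff (hφ : HasDerivAt φ φ' ‖projFst x‖)
    (hf : HasDerivAt f f' (x (Fin.last n))) (hy : projFst x ≠ 0) :
    HasFDerivAt (fun v : Euc (n + 1) => φ ‖projFst v‖ * f (v (Fin.last n)))
      (φ ‖projFst x‖ • f' • EuclideanSpace.proj (Fin.last n) +
        f (x (Fin.last n)) • φ' • ‖projFst x‖⁻¹ • (innerSL ℝ (projFst x)).comp (projFstL n))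
      x := by
  have hnorm : HasFDerivAt (fun v : Euc (n + 1) => ‖projFst v‖)
      (‖projFst x‖⁻¹ • (innerSL ℝ (projFst x)).comp (projFstL n)) x := by
    simpa [Function.comp_def, ContinuousLinearMap.smul_comp] using
      (hasFDerivAt_norm_of_ne_zero hy).comp x (projFstL n).hasFDerivAt
  have hlast := hf.comp_hasFDerivAt x
    (EuclideanSpace.proj (Fin.last n) : Euc (n + 1) →L[ℝ] ℝ).hasFDerivAt
  exact (hφ.comp_hasFDerivAt x hnorm).mul hlast

lemma divg_sub_inner_fderiv_Xfield (hφ : HasDerivAt φ φ' ‖projFst x‖)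
    (hf : HasDerivAt f f' (x (Fin.last n))) (hy : projFst x ≠ 0) {ν : Euc (n + 1)}
    (hνx : ⟪x, ν⟫ = 0) :
    divg (Xfield φ f) x - ⟪(fderiv ℝ (Xfield φ f) x) ν, ν⟫ =
      φ ‖projFst x‖ * f' * (1 - ⟪ν, EuclideanSpace.single (Fin.last n) (1 : ℝ)⟫ ^ 2) +
        φ' * (f (x (Fin.last n)) / ‖projFst x‖) * x (Fin.last n) *
          ⟪ν, EuclideanSpace.single (Fin.last n) (1 : ℝ)⟫ ^ 2 := by
  have hcone : ⟪projFst x, projFst ν⟫ + x (Fin.last n) * ν (Fin.last n) = 0 :=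
    (inner_eq_inner_projFst_add x ν).symm.trans hνx
  have hνe : ⟪ν, EuclideanSpace.single (Fin.last n) (1 : ℝ)⟫ = ν (Fin.last n) := by
    simp [EuclideanSpace.inner_single_right]
  refine (divg_sub_inner_fderiv_smul_const (hasFDerivAt_Xfield_coeff hφ hf hy) _ ν).trans ?_
  rw [real_inner_comm, hνe]
  simp only [add_apply, smul_apply, PiLp.proj_apply, PiLp.single_eq_same, smul_eq_mul, mul_one,
    ContinuousLinearMap.comp_apply, projFstL_apply, projFst_single_last, coe_innerSL_apply,
    inner_zero_right, mul_zero, add_zero]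
  linear_combination -(f (x (Fin.last n)) * φ' * ‖projFst x‖⁻¹ * ν (Fin.last n)) * hcone

end Xfield

theorem tangential_divergence_nonpos_general
    (n : ℕ) (φ f : ℝ → ℝ)
    (hφ : ContDiff ℝ 1 φ) (hf : ContDiff ℝ 1 f)
    (hφ0 : ∀ s, 0 ≤ φ s) (hf0 : ∀ s, 0 ≤ f s)
    (hφmono : Antitone φ) (hfmono : Antitone f)
    (x : Euc (n + 1))
    (ν : Euc (n + 1)) (hν : ‖ν‖ = 1) (hνx : ⟪x, ν⟫ = 0)
    (ht : 0 ≤ x (Fin.last n)) (hy : projFst x ≠ 0) :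
    divg (Xfield φ f) x - ⟪(fderiv ℝ (Xfield φ f) x) ν, ν⟫ =
        φ ‖projFst x‖ * deriv f (x (Fin.last n)) *
          (1 - ⟪ν, EuclideanSpace.single (Fin.last n) (1 : ℝ)⟫ ^ 2) +
        deriv φ ‖projFst x‖ * (f (x (Fin.last n)) / ‖projFst x‖) * x (Fin.last n) *
          ⟪ν, EuclideanSpace.single (Fin.last n) (1 : ℝ)⟫ ^ 2 ∧
      φ ‖projFst x‖ * deriv f (x (Fin.last n)) *
          (1 - ⟪ν, EuclideanSpace.single (Fin.last n) (1 : ℝ)⟫ ^ 2) +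
        deriv φ ‖projFst x‖ * (f (x (Fin.last n)) / ‖projFst x‖) * x (Fin.last n) *
          ⟪ν, EuclideanSpace.single (Fin.last n) (1 : ℝ)⟫ ^ 2 ≤ 0 := by
  refine ⟨divg_sub_inner_fderiv_Xfield (hφ.differentiable one_ne_zero _).hasDerivAt
    (hf.differentiable one_ne_zero _).hasDerivAt hy hνx, ?_⟩
  have hνe : ⟪ν, EuclideanSpace.single (Fin.last n) (1 : ℝ)⟫ ^ 2 ≤ 1 := by
    rw [sq_le_one_iff_abs_le_one]
    simpa [hν] using abs_real_inner_le_norm ν (EuclideanSpace.single (Fin.last n) (1 : ℝ))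
  have hφ' : deriv φ ‖projFst x‖ ≤ 0 := hφmono.deriv_nonpos
  have hf' : deriv f (x (Fin.last n)) ≤ 0 := hfmono.deriv_nonpos
  have hfy : 0 ≤ f (x (Fin.last n)) / ‖projFst x‖ := div_nonneg (hf0 _) (norm_nonneg _)
  apply add_nonpos
  · exact mul_nonpos_of_nonpos_of_nonneg (mul_nonpos_of_nonneg_of_nonpos (hφ0 _) hf')
      (sub_nonneg.2 hνe)
  · exact mul_nonpos_of_nonpos_of_nonneg
      (mul_nonpos_of_nonpos_of_nonneg (mul_nonpos_of_nonpos_of_nonneg hφ' hfy) ht) (sq_nonneg _)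

/-- For `X(y,t) = φ(|y|) f(t) e_N` with `φ, f` nonnegative, nonincreasing, `C¹` and equal to
`1` on `(-∞,0]`, and `K` an open cone with vertex `0`, at every boundary point `x = (y,t)`
with `t ≥ 0`, `y ≠ 0`, and unit normal `ν` (which satisfies `⟨x,ν⟩ = 0`), the tangential
divergence satisfies
`div_{∂K} X = φ(|y|) f'(t)(1-⟨ν,e_N⟩²) + φ'(|y|)(f(t)/|y|) t ⟨ν,e_N⟩² ≤ 0`. -/
theorem tangential_divergence_nonpos
    (n : ℕ) (φ f : ℝ → ℝ)
    (hφ : ContDiff ℝ 1 φ) (hf : ContDiff ℝ 1 f)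
    (hφ0 : ∀ s, 0 ≤ φ s) (hf0 : ∀ s, 0 ≤ f s)
    (hφmono : Antitone φ) (hfmono : Antitone f)
    (hφ1 : ∀ s ≤ (0 : ℝ), φ s = 1) (hf1 : ∀ s ≤ (0 : ℝ), f s = 1)
    (K : Set (Euc (n + 1))) (hKopen : IsOpen K)
    (hKcone : ∀ t : ℝ, 0 < t → t • K = K)
    (x : Euc (n + 1)) (hx : x ∈ frontier K)
    (ν : Euc (n + 1)) (hν : ‖ν‖ = 1) (hνx : ⟪x, ν⟫ = 0)
    (ht : 0 ≤ x (Fin.last n)) (hy : projFst x ≠ 0) :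
    divg (Xfield φ f) x - ⟪(fderiv ℝ (Xfield φ f) x) ν, ν⟫ =
        φ ‖projFst x‖ * deriv f (x (Fin.last n)) *
          (1 - ⟪ν, EuclideanSpace.single (Fin.last n) (1 : ℝ)⟫ ^ 2) +
        deriv φ ‖projFst x‖ * (f (x (Fin.last n)) / ‖projFst x‖) * x (Fin.last n) *
          ⟪ν, EuclideanSpace.single (Fin.last n) (1 : ℝ)⟫ ^ 2 ∧
      φ ‖projFst x‖ * deriv f (x (Fin.last n)) *
          (1 - ⟪ν, EuclideanSpace.single (Fin.last n) (1 : ℝ)⟫ ^ 2) +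
        deriv φ ‖projFst x‖ * (f (x (Fin.last n)) / ‖projFst x‖) * x (Fin.last n) *
          ⟪ν, EuclideanSpace.single (Fin.last n) (1 : ℝ)⟫ ^ 2 ≤ 0 :=
  tangential_divergence_nonpos_general n φ f hφ hf hφ0 hf0 hφmono hfmono x ν hν hνx ht hy
end
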